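/- For every positive integer n̂, the following identity holds for the second sum appearing in the expansion of T_c(n̂+1): Σ_{i=⌊c(n̂+1)⌋+1}^{n̂+1} c(n̂+1) · p(i | n̂+1) = Σ_{i=⌊c·n̂⌋+1}^{n̂} c·n̂ · p(i | n̂) + c − c·Σ_{i=1}^{⌊c·n̂⌋} p_T(i) − c(n̂+1) · p_T(⌊c(n̂+1)⌋) · (⌊c(n̂+1)⌋ − ⌊c·n̂⌋). -/

import Mathlib

/-!
Since `p(· | n̂)` agrees with `p_T` below `n̂` and puts the remaining mass at `n̂`, each tail sum
`Σ_{i=k+1}^{n̂} p(i | n̂)` equals `1 - Σ_{i=1}^{k} p_T(i)`. For `0 < c < 1` the floors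
`⌊c n̂⌋ ≤ ⌊c(n̂+1)⌋ ≤ ⌊c n̂⌋ + 1` differ by at most one, so the two partial sums of `p_T` differ by
`p_T(⌊c(n̂+1)⌋) · (⌊c(n̂+1)⌋ - ⌊c n̂⌋)`, and the identity is then linear algebra.
-/

/-- The pmf `p(i | n̂)` obtained by truncating the triggering probabilities `p_T` at `n̂`. -/
noncomputable def pcond (pT : ℕ → ℝ) (nh i : ℕ) : ℝ :=
  if 0 < i ∧ i < nh then pT i
  else if i = nh then 1 - ∑ j ∈ Finset.Ico 1 nh, pT j
  else 0

open Finset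

lemma pcond_of_pos_of_lt (pT : ℕ → ℝ) {nh i : ℕ} (hi : 0 < i) (hin : i < nh) :
    pcond pT nh i = pT i := by
  simp [pcond, hi, hin]

lemma pcond_self (pT : ℕ → ℝ) (nh : ℕ) :
    pcond pT nh nh = 1 - ∑ j ∈ Ico 1 nh, pT j := by
  simp [pcond]

lemma sum_Icc_pcond (pT : ℕ → ℝ) {nh k : ℕ} (hk : k < nh) :
    ∑ i ∈ Icc (k + 1) nh, pcond pT nh i = 1 - ∑ i ∈ Icc 1 k, pT i := by
  have h_body : ∑ i ∈ Ico (k + 1) nh, pcond pT nh i = ∑ i ∈ Ico (k + 1) nh, pT i :=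
    sum_congr rfl fun i hi => pcond_of_pos_of_lt pT (by grind) (mem_Ico.1 hi).2
  have h_split : ∑ j ∈ Ico 1 nh, pT j = ∑ j ∈ Icc 1 k, pT j + ∑ j ∈ Ico (k + 1) nh, pT j := by
    rw [← sum_Ico_consecutive _ (by omega : 1 ≤ k + 1) hk, Ico_add_one_right_eq_Icc]
  rw [← Ico_add_one_right_eq_Icc, sum_Ico_succ_top hk, h_body, pcond_self, h_split]
  ring

lemma Nat.floor_le_floor_add_one_of_le_add_one {R : Type*} [Semiring R] [LinearOrder R]
    [IsStrictOrderedRing R] [FloorSemiring R] {a b : R} (ha : 0 ≤ a) (hb : b ≤ a + 1) :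
    ⌊b⌋₊ ≤ ⌊a⌋₊ + 1 :=
  Nat.floor_add_one ha ▸ Nat.floor_mono hb

lemma sum_Icc_one_of_le_of_le_succ {R : Type*} [CommRing R] (f : ℕ → R) {m m' : ℕ}
    (h₁ : m ≤ m') (h₂ : m' ≤ m + 1) :
    ∑ i ∈ Icc 1 m', f i = ∑ i ∈ Icc 1 m, f i + f m' * ((m' : R) - m) := by
  obtain rfl | rfl : m' = m ∨ m' = m + 1 := by omega
  · simp
  · rw [sum_Icc_succ_top (by omega)]
    push_cast
    ring

theorem second_sum_identity_general (c : ℝ) (hc : c ∈ Set.Ioo (0 : ℝ) 1)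
    (pT : ℕ → ℝ) :
    ∀ nh : ℕ, 0 < nh →
      ∑ i ∈ Finset.Icc (⌊c * ((nh : ℝ) + 1)⌋₊ + 1) (nh + 1),
          c * ((nh : ℝ) + 1) * pcond pT (nh + 1) i =
        ∑ i ∈ Finset.Icc (⌊c * (nh : ℝ)⌋₊ + 1) nh, c * (nh : ℝ) * pcond pT nh i
          + c - c * ∑ i ∈ Finset.Icc 1 ⌊c * (nh : ℝ)⌋₊, pT i
          - c * ((nh : ℝ) + 1) * pT ⌊c * ((nh : ℝ) + 1)⌋₊ *
              ((⌊c * ((nh : ℝ) + 1)⌋₊ : ℝ) - (⌊c * (nh : ℝ)⌋₊ : ℝ)) := by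
  intro nh hnh
  obtain ⟨hc0, hc1⟩ := hc
  have hn : (0 : ℝ) < nh := by exact_mod_cast hnh
  have h_lt : ⌊c * (nh : ℝ)⌋₊ < nh := (Nat.floor_lt (by positivity)).2 (by nlinarith)
  have h_lt_succ : ⌊c * ((nh : ℝ) + 1)⌋₊ < nh + 1 :=
    (Nat.floor_lt (by positivity)).2 (by push_cast; nlinarith)
  have h_mono : ⌊c * (nh : ℝ)⌋₊ ≤ ⌊c * ((nh : ℝ) + 1)⌋₊ := Nat.floor_mono (by nlinarith)
  have h_jump : ⌊c * ((nh : ℝ) + 1)⌋₊ ≤ ⌊c * (nh : ℝ)⌋₊ + 1 :=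
    Nat.floor_le_floor_add_one_of_le_add_one (by positivity) (by linarith)
  rw [← mul_sum, ← mul_sum, sum_Icc_pcond pT h_lt_succ, sum_Icc_pcond pT h_lt,
    sum_Icc_one_of_le_of_le_succ pT h_mono h_jump]
  ring

/-- The identity for the second sum `Σ_{i>c(n̂+1)}^{n̂+1} c(n̂+1)·p(i | n̂+1)` appearing in the
expansion of `T_c(n̂+1)`. -/
theorem second_sum_identity (c : ℝ) (hc : c ∈ Set.Ioo (0 : ℝ) 1)
    (pT : ℕ → ℝ) (hpT0 : pT 0 = 0) (hpos : ∀ i, 0 ≤ pT i) (hsum : HasSum pT 1) :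
    ∀ nh : ℕ, 0 < nh →
      ∑ i ∈ Finset.Icc (⌊c * ((nh : ℝ) + 1)⌋₊ + 1) (nh + 1),
          c * ((nh : ℝ) + 1) * pcond pT (nh + 1) i =
        ∑ i ∈ Finset.Icc (⌊c * (nh : ℝ)⌋₊ + 1) nh, c * (nh : ℝ) * pcond pT nh i
          + c - c * ∑ i ∈ Finset.Icc 1 ⌊c * (nh : ℝ)⌋₊, pT i
          - c * ((nh : ℝ) + 1) * pT ⌊c * ((nh : ℝ) + 1)⌋₊ *
              ((⌊c * ((nh : ℝ) + 1)⌋₊ : ℝ) - (⌊c * (nh : ℝ)⌋₊ : ℝ)) :=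
  second_sum_identity_general c hc pT
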